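/- If u, v are nonempty subsets of {1,...,N} with v ⊊ u, and P_{u,j} satisfies the weak annihilating conditions for u while Q_v is any integrable function of X_v, then E[P_{u,j}(X_u) Q_v(X_v)] = 0. -/

import Mathlib

/-!
Pick a coordinate `i ∈ u \ v`. By Fubini, integrate over `z_i` first: `Q(z_v)` does not depend on
`z_i`, so the inner integral is `Q(z_v) ∫ P fu dz_i`, which vanishes by the annihilating condition
at `i`.
-/

open MeasureTheory Function

namespace MeasurableEquiv

variable {ι α : Type*} [DecidableEq ι] [MeasurableSpace α]

def piSplitAt (i : ι) : (ι → α) ≃ᵐ α × ({j // j ≠ i} → α) :=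
  (piEquivPiSubtypeProd (fun _ => α) (· = i)).trans
    (prodCongr (funUnique {j // j = i} α) (refl _))

theorem piSplitAt_symm_apply (i : ι) (t : α) (y : {j // j ≠ i} → α) (j : ι) :
    (piSplitAt i).symm (t, y) j = if h : j = i then t else y ⟨j, h⟩ := by
  simp only [piSplitAt, piEquivPiSubtypeProd, trans_symm, symm_mk, trans_apply, coe_mk,
    Equiv.piEquivPiSubtypeProd_symm_apply]
  split_ifs <;> rfl

theorem update_piSplitAt_symm (i : ι) (s t : α) (y : {j // j ≠ i} → α) :
    update ((piSplitAt i).symm (s, y)) i t = (piSplitAt i).symm (t, y) := by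
  ext j
  by_cases h : j = i
  · subst h; simp [piSplitAt_symm_apply]
  · simp [piSplitAt_symm_apply, h]

end MeasurableEquiv

open MeasurableEquiv

section SplitAt

variable {ι α : Type*} [Fintype ι] [DecidableEq ι] [MeasurableSpace α]
  (μ : Measure α) [SigmaFinite μ]

theorem measurePreserving_piSplitAt (i : ι) :
    MeasurePreserving (piSplitAt i) (Measure.pi fun _ => μ)
      (μ.prod (Measure.pi fun _ : {j // j ≠ i} => μ)) := by
  refine (MeasurePreserving.prod ?_ (MeasurePreserving.id _)).comp
    (measurePreserving_piEquivPiSubtypeProd (fun _ => μ) (· = i))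
  convert measurePreserving_funUnique μ {j // j = i}
  rfl

theorem integral_eq_zero_of_integral_update_eq_zero {E : Type*} [NormedAddCommGroup E]
    [NormedSpace ℝ E] {g : (ι → α) → E} (hg : Integrable g (Measure.pi fun _ => μ)) (i : ι)
    (h : ∀ z, ∫ t, g (update z i t) ∂μ = 0) :
    ∫ z, g z ∂Measure.pi (fun _ => μ) = 0 := by
  have hsplit := (measurePreserving_piSplitAt μ i).symm
  have hg' : Integrable (fun p => g ((piSplitAt i).symm p))
      (μ.prod (Measure.pi fun _ : {j // j ≠ i} => μ)) :=
    (hsplit.integrable_comp_emb (piSplitAt i).symm.measurableEmbedding).mpr hg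
  have h_fiber (y : {j // j ≠ i} → α) : ∫ t, g ((piSplitAt i).symm (t, y)) ∂μ = 0 := by
    rcases isEmpty_or_nonempty α with hα | ⟨⟨s⟩⟩
    · simp [Measure.eq_zero_of_isEmpty μ]
    · simpa only [update_piSplitAt_symm] using h ((piSplitAt i).symm (s, y))
  rw [← hsplit.integral_comp' g, integral_prod_symm _ hg']
  simp [h_fiber]

end SplitAt

theorem stmt_9_general (N : ℕ)
    (u v : Finset (Fin N)) (hvu : v ⊂ u)
    (P fu : (↥u → ℝ) → ℝ) (Q : (↥v → ℝ) → ℝ)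
    (hannihilate : ∀ (i : Fin N) (hi : i ∈ u) (z : ↥u → ℝ),
      ∫ t : ℝ, P (Function.update z ⟨i, hi⟩ t) * fu (Function.update z ⟨i, hi⟩ t) = 0)
    (hint : Integrable (fun z : ↥u → ℝ =>
      P z * Q (fun i => z ⟨(i : Fin N), hvu.subset i.2⟩) * fu z)) :
    ∫ z : ↥u → ℝ, P z * Q (fun i => z ⟨(i : Fin N), hvu.subset i.2⟩) * fu z = 0 := by
  obtain ⟨i, hiu, hiv⟩ := Finset.exists_of_ssubset hvu
  refine integral_eq_zero_of_integral_update_eq_zero volume hint ⟨i, hiu⟩ fun z => ?_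
  have hQ (t : ℝ) : (fun j : ↥v => update z ⟨i, hiu⟩ t ⟨j, hvu.subset j.2⟩) =
      fun j : ↥v => z ⟨j, hvu.subset j.2⟩ := by
    funext j
    have hji : (⟨j, hvu.subset j.2⟩ : ↥u) ≠ ⟨i, hiu⟩ := fun h => hiv (Subtype.mk.inj h ▸ j.2)
    exact update_of_ne hji _ _
  simp_rw [hQ, mul_right_comm _ (Q _), integral_mul_const, hannihilate i hiu z, zero_mul]

/-- First zero case of Proposition 3: if `v ⊊ u`, `P` (a function of `X_u`) satisfies
the weak annihilating conditions for `u`, and `Q` is any function of `X_v` such that the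
product is integrable, then `E[P(X_u) Q(X_v)] = 0`. -/
theorem stmt_9 (N : ℕ) (f : (Fin N → ℝ) → ℝ)
    (hf_nonneg : ∀ x, 0 ≤ f x) (hf_prob : ∫ x, f x = 1)
    (u v : Finset (Fin N)) (hu : u.Nonempty) (hv : v.Nonempty) (hvu : v ⊂ u)
    (P fu : (↥u → ℝ) → ℝ) (Q : (↥v → ℝ) → ℝ)
    (hmargu : ∀ z : ↥u → ℝ, fu z =
      ∫ w : (↥uᶜ → ℝ), f (fun i =>
        if h : i ∈ u then z ⟨i, h⟩ else w ⟨i, Finset.mem_compl.mpr h⟩))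
    (hL2P : Integrable (fun z => (P z) ^ 2 * fu z))
    (hannihilate : ∀ (i : Fin N) (hi : i ∈ u) (z : ↥u → ℝ),
      ∫ t : ℝ, P (Function.update z ⟨i, hi⟩ t) * fu (Function.update z ⟨i, hi⟩ t) = 0)
    (hint : Integrable (fun z : ↥u → ℝ =>
      P z * Q (fun i => z ⟨(i : Fin N), hvu.subset i.2⟩) * fu z)) :
    ∫ z : ↥u → ℝ, P z * Q (fun i => z ⟨(i : Fin N), hvu.subset i.2⟩) * fu z = 0 :=
  stmt_9_general N u v hvu P fu Q hannihilate hint
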